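/- Under the hypotheses f₁, f₂ ≥ 0, the discrete functional J_h(v) = -(1/2)(L_h v, v) + (f₁, v∨0) - (f₂, v∧0) - (L_h g, v), defined on grid functions v vanishing at the boundary points (with L_h the three-point discrete Laplacian extended by the boundary data g), is bounded below on ℝ^{N-1}. -/

import Mathlib

noncomputable def Lh (h : ℝ) (v : ℕ → ℝ) (i : ℕ) : ℝ :=
  (v (i - 1) - 2 * v i + v (i + 1)) / h ^ 2

noncomputable def Jh (N : ℕ) (h : ℝ) (f₁ f₂ g : ℕ → ℝ) (v : ℕ → ℝ) : ℝ :=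
  -(1 / 2) * ∑ i ∈ Finset.Icc 1 (N - 1), Lh h v i * v i
    + ∑ i ∈ Finset.Icc 1 (N - 1), f₁ i * max (v i) 0
    - ∑ i ∈ Finset.Icc 1 (N - 1), f₂ i * min (v i) 0
    - ∑ i ∈ Finset.Icc 1 (N - 1), Lh h g i * v i

/-!
Summation by parts turns the quadratic part `-(1/2)(L_h v, v)` into `s / (2h²)`, where
`s = Σ (v_{i+1} - v_i)²`. Since `v₀ = 0`, every `|v_i|` is at most `T = Σ |v_{i+1} - v_i|`, so the
linear part is at most `C T` with `C = Σ |(L_h g)_i|`, and `C |d| ≤ d² / (2h²) + C² h² / 2` term by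
term. The nonlinear terms `(f₁, v ∨ 0)` and `-(f₂, v ∧ 0)` are nonnegative, so
`J_h(v) ≥ -N C² h² / 2`.
-/

open Finset

theorem sum_secondDiff_mul_self (v : ℕ → ℝ) {N : ℕ} (hN : 1 ≤ N) :
    ∑ i ∈ Icc 1 (N - 1), (v (i - 1) - 2 * v i + v (i + 1)) * v i
      = -∑ i ∈ range N, (v (i + 1) - v i) ^ 2
        - (v 1 - v 0) * v 0 + (v N - v (N - 1)) * v N := by
  induction N, hN using Nat.le_induction with
  | base => simp; ring
  | succ n hn ih =>
    obtain ⟨m, rfl⟩ := Nat.exists_eq_add_one_of_ne_zero (by omega : n ≠ 0)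
    simp only [Nat.add_sub_cancel] at ih ⊢
    rw [sum_Icc_succ_top (by omega), sum_range_succ, ih, Nat.add_sub_cancel]
    ring

theorem sum_Lh_mul_self_of_boundary_eq_zero {h : ℝ} {v : ℕ → ℝ} {N : ℕ}
    (hv0 : v 0 = 0) (hvN : v N = 0) :
    ∑ i ∈ Icc 1 (N - 1), Lh h v i * v i = -(∑ i ∈ range N, (v (i + 1) - v i) ^ 2) / h ^ 2 := by
  rcases Nat.eq_zero_or_pos N with rfl | hN
  · simp
  simp only [Lh, div_mul_eq_mul_div, ← sum_div]
  rw [sum_secondDiff_mul_self v hN, hv0, hvN]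
  ring

theorem abs_le_sum_abs_sub_of_eq_zero {v : ℕ → ℝ} (hv0 : v 0 = 0) {N i : ℕ} (hi : i ≤ N) :
    |v i| ≤ ∑ j ∈ range N, |v (j + 1) - v j| := by
  calc |v i| = |∑ j ∈ range i, (v (j + 1) - v j)| := by rw [sum_range_sub, hv0, sub_zero]
    _ ≤ ∑ j ∈ range i, |v (j + 1) - v j| := abs_sum_le_sum_abs _ _
    _ ≤ ∑ j ∈ range N, |v (j + 1) - v j| :=
      sum_le_sum_of_subset_of_nonneg (range_subset_range.2 hi) fun _ _ _ => abs_nonneg _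

theorem mul_abs_le_sq_div_add {h : ℝ} (hh : h ≠ 0) (C d : ℝ) :
    C * |d| ≤ d ^ 2 / (2 * h ^ 2) + C ^ 2 * h ^ 2 / 2 := by
  have key : 0 ≤ (|d| / h - C * h) ^ 2 / 2 := by positivity
  have expand : (|d| / h - C * h) ^ 2 / 2 = d ^ 2 / (2 * h ^ 2) + C ^ 2 * h ^ 2 / 2 - C * |d| := by
    rw [← sq_abs d]
    field_simp
    ring
  linarith

theorem abs_sum_mul_le_of_eq_zero {h : ℝ} (hh : h ≠ 0) (c v : ℕ → ℝ) (hv0 : v 0 = 0) (N : ℕ) :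
    |∑ i ∈ Icc 1 (N - 1), c i * v i|
      ≤ (∑ i ∈ range N, (v (i + 1) - v i) ^ 2) / (2 * h ^ 2)
        + N * (∑ i ∈ Icc 1 (N - 1), |c i|) ^ 2 * h ^ 2 / 2 := by
  set C := ∑ i ∈ Icc 1 (N - 1), |c i|
  calc |∑ i ∈ Icc 1 (N - 1), c i * v i|
      ≤ ∑ i ∈ Icc 1 (N - 1), |c i| * ∑ j ∈ range N, |v (j + 1) - v j| := by
        refine (abs_sum_le_sum_abs _ _).trans (sum_le_sum fun i hi => ?_)
        rw [abs_mul]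
        exact mul_le_mul_of_nonneg_left
          (abs_le_sum_abs_sub_of_eq_zero hv0 ((mem_Icc.1 hi).2.trans (Nat.sub_le N 1)))
          (abs_nonneg _)
    _ = ∑ j ∈ range N, C * |v (j + 1) - v j| := by rw [← sum_mul, mul_sum]
    _ ≤ ∑ j ∈ range N, ((v (j + 1) - v j) ^ 2 / (2 * h ^ 2) + C ^ 2 * h ^ 2 / 2) :=
        sum_le_sum fun j _ => mul_abs_le_sq_div_add hh C _
    _ = _ := by rw [sum_add_distrib, ← sum_div, sum_const, card_range, nsmul_eq_mul]; ring

theorem stmt_17_general (N : ℕ) (h : ℝ) (hh : 0 < h)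
    (f₁ f₂ g : ℕ → ℝ) (hf₁ : ∀ i, 0 ≤ f₁ i) (hf₂ : ∀ i, 0 ≤ f₂ i) :
    ∃ m : ℝ, ∀ v : ℕ → ℝ, v 0 = 0 → v N = 0 → m ≤ Jh N h f₁ f₂ g v := by
  refine ⟨-(N * (∑ i ∈ Icc 1 (N - 1), |Lh h g i|) ^ 2 * h ^ 2 / 2), fun v hv0 hvN => ?_⟩
  have quadratic := sum_Lh_mul_self_of_boundary_eq_zero (h := h) hv0 hvN
  have linear := abs_le.1 (abs_sum_mul_le_of_eq_zero hh.ne' (Lh h g) v hv0 N)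
  have positivePart : 0 ≤ ∑ i ∈ Icc 1 (N - 1), f₁ i * max (v i) 0 :=
    sum_nonneg fun i _ => mul_nonneg (hf₁ i) (le_max_right _ _)
  have negativePart : ∑ i ∈ Icc 1 (N - 1), f₂ i * min (v i) 0 ≤ 0 :=
    sum_nonpos fun i _ => mul_nonpos_of_nonneg_of_nonpos (hf₂ i) (min_le_right _ _)
  have halve : -(1 / 2) * (-(∑ i ∈ range N, (v (i + 1) - v i) ^ 2) / h ^ 2)
      = (∑ i ∈ range N, (v (i + 1) - v i) ^ 2) / (2 * h ^ 2) := by ring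
  rw [Jh, quadratic, halve]
  linarith [linear.1]

theorem stmt_17 (N : ℕ) (hN : 1 ≤ N) (h : ℝ) (hh : 0 < h)
    (f₁ f₂ g : ℕ → ℝ) (hf₁ : ∀ i, 0 ≤ f₁ i) (hf₂ : ∀ i, 0 ≤ f₂ i) :
    ∃ m : ℝ, ∀ v : ℕ → ℝ, v 0 = 0 → v N = 0 → m ≤ Jh N h f₁ f₂ g v :=
  stmt_17_general N h hh f₁ f₂ g hf₁ hf₂
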